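/- Let A be a normal ordered subgroupoid of an ordered groupoid G. Suppose g ≃_A g₁ and h ≃_A h₁, with g⁻¹g ≃_A hh⁻¹. Let (a,p) be an A-nexus between g⁻¹g and hh⁻¹ and (a₁,p₁) an A-nexus between g₁⁻¹g₁ and h₁h₁⁻¹. Then (g | a𝐝)·a·h ≃_A (g₁ | a₁𝐝)·a₁·h₁, where (g | a𝐝) denotes the corestriction of g to a𝐝. Consequently the composition [g][h] := [(g|a𝐝)ah] of ≃_A-classes is well defined, independent of all choices. -/
import Mathlib


/-!  A one-sorted algebraic formalization of ordered groupoids (Ehresmann / Lawson style).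
Arrows form the carrier; composition `g * h` is "defined" when `g⁻¹ * g = h * h⁻¹`,
and is junk otherwise.  `res f g` is the restriction `(f|g)` of axiom (OG3). -/

universe u v w u'

class OGroupoid (G : Type u) extends PartialOrder G, Mul G, Inv G where
  gpd_assoc : ∀ g h k : G, g⁻¹ * g = h * h⁻¹ → h⁻¹ * h = k * k⁻¹ →
      (g * h) * k = g * (h * k)
  gpd_inv_inv : ∀ g : G, g⁻¹⁻¹ = g
  gpd_mul_inv_rev : ∀ g h : G, g⁻¹ * g = h * h⁻¹ → (g * h)⁻¹ = h⁻¹ * g⁻¹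
  gpd_dom_mul : ∀ g h : G, g⁻¹ * g = h * h⁻¹ → (g * h) * (g * h)⁻¹ = g * g⁻¹
  gpd_ran_mul : ∀ g h : G, g⁻¹ * g = h * h⁻¹ → (g * h)⁻¹ * (g * h) = h⁻¹ * h
  gpd_id_left : ∀ g : G, g * g⁻¹ * g = g
  gpd_id_right : ∀ g : G, g * (g⁻¹ * g) = g
  ord_inv : ∀ g h : G, g ≤ h → g⁻¹ ≤ h⁻¹
  ord_mul : ∀ g₁ g₂ h₁ h₂ : G, g₁ ≤ g₂ → h₁ ≤ h₂ →
      g₁⁻¹ * g₁ = h₁ * h₁⁻¹ → g₂⁻¹ * g₂ = h₂ * h₂⁻¹ → g₁ * h₁ ≤ g₂ * h₂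
  res : G → G → G
  res_dom : ∀ f g : G, f * f⁻¹ = f → f ≤ g * g⁻¹ → res f g * (res f g)⁻¹ = f
  res_le : ∀ f g : G, f * f⁻¹ = f → f ≤ g * g⁻¹ → res f g ≤ g
  res_unique : ∀ f g k : G, f * f⁻¹ = f → f ≤ g * g⁻¹ → k * k⁻¹ = f → k ≤ g →
      k = res f g

namespace OGroupoid

variable {G : Type u} [OGroupoid G]

/-- The domain identity `g𝐝 = g * g⁻¹`. -/
def dm (g : G) : G := g * g⁻¹

/-- The range identity `g𝐫 = g⁻¹ * g`. -/
def rn (g : G) : G := g⁻¹ * g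

/-- The composition `g * h` is defined. -/
def Cmp (g h : G) : Prop := g⁻¹ * g = h * h⁻¹

/-- `e` is an identity of the groupoid. -/
def IsId (e : G) : Prop := e * e⁻¹ = e

/-- The corestriction `(g|f) = (f|g⁻¹)⁻¹` for an identity `f ≤ g𝐫`. -/
def cor (g f : G) : G := (res f g⁻¹)⁻¹

end OGroupoid

open OGroupoid

/-- An ordered functor between ordered groupoids. -/
structure OFunctor (G : Type u) (H : Type v) [OGroupoid G] [OGroupoid H] where
  toFun : G → H
  map_mul : ∀ g h : G, Cmp g h → toFun (g * h) = toFun g * toFun h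
  map_inv : ∀ g : G, toFun g⁻¹ = (toFun g)⁻¹
  map_le : ∀ g h : G, g ≤ h → toFun g ≤ toFun h

namespace OFunctor

variable {G : Type u} {H : Type v} [OGroupoid G] [OGroupoid H]

/-- Star-surjectivity: `φ` is a fibration of ordered groupoids. -/
def StarSurjective (φ : OFunctor G H) : Prop :=
  ∀ e : G, IsId e → ∀ h : H, dm h = φ.toFun e → ∃ g : G, dm g = e ∧ φ.toFun g = h

/-- Star-injectivity: `φ` is an immersion of ordered groupoids. -/
def StarInjective (φ : OFunctor G H) : Prop :=
  ∀ g k : G, dm g = dm k → φ.toFun g = φ.toFun k → g = k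

/-- A covering is a star-bijective ordered functor. -/
def IsCovering (φ : OFunctor G H) : Prop := StarSurjective φ ∧ StarInjective φ

/-- The kernel of an ordered functor. -/
def ker (φ : OFunctor G H) : Set G := {g : G | IsId (φ.toFun g)}

end OFunctor

namespace OGroupoid

variable {G : Type u} [OGroupoid G]

/-- `A` is a subgroupoid: closed under inversion and (defined) composition. -/
def IsSubgroupoid (A : Set G) : Prop :=
  (∀ a ∈ A, a⁻¹ ∈ A) ∧ ∀ a ∈ A, ∀ b ∈ A, Cmp a b → a * b ∈ A

/-- `A` is a normal ordered subgroupoid of `G`: a wide subgroupoid, closed under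
restriction, and closed under conjugation `h⁻¹ a k` whenever `h` and `k` have a
common upper bound in `G`. -/
def IsNormalOSub (A : Set G) : Prop :=
  IsSubgroupoid A ∧
  (∀ e : G, IsId e → e ∈ A) ∧
  (∀ a ∈ A, ∀ e : G, IsId e → e ≤ dm a → res e a ∈ A) ∧
  (∀ a ∈ A, ∀ h k : G, (∃ g : G, h ≤ g ∧ k ≤ g) → dm h = dm a → rn a = dm k →
      h⁻¹ * a * k ∈ A)

/-- The relation `g ≃_A h`: there are `a, b, c, d ∈ A` with `a g b` and `c h d`
defined, `a g b ≤ h` and `c h d ≤ g`. -/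
def simA (A : Set G) (g h : G) : Prop :=
  (∃ a ∈ A, ∃ b ∈ A, Cmp a g ∧ Cmp g b ∧ a * g * b ≤ h) ∧
  (∃ c ∈ A, ∃ d ∈ A, Cmp c h ∧ Cmp h d ∧ c * h * d ≤ g)

/-- The relation inducing the order on `≃_A`-classes: `[g] ≤ [k]` iff there are
`a, b ∈ A` with `a g b` defined and `a g b ≤ k`. -/
def leA (A : Set G) (g k : G) : Prop :=
  ∃ a ∈ A, ∃ b ∈ A, Cmp a g ∧ Cmp g b ∧ a * g * b ≤ k

/-- An `A`-nexus between identities `e` and `f`: a pair `(a,p)` of arrows of `A`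
with `a𝐝 ≤ e`, `a𝐫 = f`, `p𝐝 ≤ f`, `p𝐫 = e`. -/
def IsNexus (A : Set G) (a p e f : G) : Prop :=
  a ∈ A ∧ p ∈ A ∧ dm a ≤ e ∧ rn a = f ∧ dm p ≤ f ∧ rn p = e

end OGroupoid

/-! ### Auxiliary lemmas for the proof of Statement 11 -/

namespace OGroupoid

variable {G : Type u} [OGroupoid G]

theorem cmpd {g h : G} (e : rn g = dm h) : Cmp g h := e
theorem cmpr {g h : G} (c : Cmp g h) : rn g = dm h := c

theorem cmp_self_inv (g : G) : Cmp g g⁻¹ := by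
  show g⁻¹ * g = g⁻¹ * g⁻¹⁻¹
  rw [gpd_inv_inv]

theorem cmp_inv_self (g : G) : Cmp g⁻¹ g := by
  show g⁻¹⁻¹ * g⁻¹ = g * g⁻¹
  rw [gpd_inv_inv]

theorem dm_inv (g : G) : dm g⁻¹ = rn g := by
  show g⁻¹ * g⁻¹⁻¹ = g⁻¹ * g
  rw [gpd_inv_inv]

theorem rn_inv (g : G) : rn g⁻¹ = dm g := by
  show g⁻¹⁻¹ * g⁻¹ = g * g⁻¹
  rw [gpd_inv_inv]

theorem isId_dm (g : G) : IsId (dm g) := gpd_dom_mul g g⁻¹ (cmp_self_inv g)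

theorem isId_rn (g : G) : IsId (rn g) := by rw [← dm_inv]; exact isId_dm g⁻¹

theorem dm_mul {g h : G} (c : Cmp g h) : dm (g * h) = dm g := gpd_dom_mul g h c
theorem rn_mul {g h : G} (c : Cmp g h) : rn (g * h) = rn h := gpd_ran_mul g h c

theorem dm_mul_self (g : G) : dm g * g = g := gpd_id_left g
theorem mul_rn_self (g : G) : g * rn g = g := gpd_id_right g

theorem massoc {g h k : G} (c1 : Cmp g h) (c2 : Cmp h k) : g * h * k = g * (h * k) :=
  gpd_assoc g h k c1 c2

theorem cancel_left {m n : G} (c : Cmp m n) : m⁻¹ * (m * n) = n := by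
  rw [← massoc (cmp_inv_self m) c]
  show rn m * n = n
  rw [cmpr c, dm_mul_self]

theorem le_dm {g h : G} (l : g ≤ h) : dm g ≤ dm h :=
  ord_mul g h g⁻¹ h⁻¹ l (ord_inv g h l) (cmp_self_inv g) (cmp_self_inv h)

theorem le_rn {g h : G} (l : g ≤ h) : rn g ≤ rn h :=
  ord_mul g⁻¹ h⁻¹ g h (ord_inv g h l) l (cmp_inv_self g) (cmp_inv_self h)

theorem mul_le' {a b c d : G} (l1 : a ≤ b) (l2 : c ≤ d) (c1 : Cmp a c) (c2 : Cmp b d) :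
    a * c ≤ b * d := ord_mul a b c d l1 l2 c1 c2

theorem res_dm {f g : G} (hf : IsId f) (l : f ≤ dm g) : dm (res f g) = f :=
  res_dom f g hf l

theorem res_le' {f g : G} (hf : IsId f) (l : f ≤ dm g) : res f g ≤ g := res_le f g hf l

theorem eq_res {k g : G} (l : k ≤ g) : k = res (dm k) g :=
  res_unique (dm k) g k (isId_dm k) (le_dm l) rfl l

theorem cor_le' {g f : G} (hf : IsId f) (l : f ≤ rn g) : cor g f ≤ g := by
  have h1 : res f g⁻¹ ≤ g⁻¹ := res_le' hf (by rw [dm_inv]; exact l)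
  have h2 := ord_inv _ _ h1
  rwa [gpd_inv_inv] at h2

theorem rn_cor {g f : G} (hf : IsId f) (l : f ≤ rn g) : rn (cor g f) = f := by
  show rn (res f g⁻¹)⁻¹ = f
  rw [rn_inv]
  exact res_dm hf (by rw [dm_inv]; exact l)

theorem eq_cor {k g : G} (l : k ≤ g) : k = cor g (rn k) := by
  have h1 : k⁻¹ = res (dm k⁻¹) g⁻¹ := eq_res (ord_inv _ _ l)
  have h2 : k⁻¹⁻¹ = (res (dm k⁻¹) g⁻¹)⁻¹ := congrArg _ h1
  rw [gpd_inv_inv, dm_inv] at h2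
  exact h2

theorem A_inv {A : Set G} (hA : IsNormalOSub A) {a : G} (ha : a ∈ A) : a⁻¹ ∈ A :=
  hA.1.1 a ha

theorem A_mul {A : Set G} (hA : IsNormalOSub A) {a b : G} (ha : a ∈ A) (hb : b ∈ A)
    (c : Cmp a b) : a * b ∈ A := hA.1.2 a ha b hb c

theorem A_res {A : Set G} (hA : IsNormalOSub A) {a e : G} (ha : a ∈ A) (he : IsId e)
    (l : e ≤ dm a) : res e a ∈ A := hA.2.2.1 a ha e he l

theorem A_cor {A : Set G} (hA : IsNormalOSub A) {a f : G} (ha : a ∈ A) (hf : IsId f)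
    (l : f ≤ rn a) : cor a f ∈ A :=
  A_inv hA (A_res hA (A_inv hA ha) hf (by rw [dm_inv]; exact l))

end OGroupoid

namespace OGroupoid

/-- Core half of Statement 11: one `leA`-direction. -/
theorem main_half {G : Type u} [OGroupoid G] {A : Set G} (hA : IsNormalOSub A)
    {g g₁ h h₁ a a₁ α β γ δ c : G}
    (ha : a ∈ A) (had : dm a ≤ rn g) (har : rn a = dm h)
    (ha₁ : a₁ ∈ A) (ha₁d : dm a₁ ≤ rn g₁) (ha₁r : rn a₁ = dm h₁)
    (hα : α ∈ A) (hβ : β ∈ A) (cαg : Cmp α g) (cgβ : Cmp g β) (hgle : α * g * β ≤ g₁)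
    (hγ : γ ∈ A) (hδ : δ ∈ A) (cγh : Cmp γ h) (chδ : Cmp h δ) (hhle : γ * h * δ ≤ h₁)
    (hc : c ∈ A) (ccr : rn c = dm h₁) (hcd : dm c ≤ dm h) :
    leA A (cor g (dm a) * a * h) (cor g₁ (dm a₁) * a₁ * h₁) := by
  have hβd : dm β = rn g := (cmpr cgβ).symm
  have hγr : rn γ = dm h := cmpr cγh
  have hδd : dm δ = rn h := (cmpr chδ).symm
  have hαr : rn α = dm g := cmpr cαg
  have cγhδ : Cmp (γ * h) δ := cmpd (by rw [rn_mul cγh]; exact cmpr chδ)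
  have cαgβ : Cmp (α * g) β := cmpd (by rw [rn_mul cαg]; exact cmpr cgβ)
  have hγd1 : dm γ ≤ dm h₁ := by
    have h0 := le_dm hhle
    rwa [dm_mul cγhδ, dm_mul cγh] at h0
  -- Gc := (g | dm a)
  set Gc := cor g (dm a) with hGc_def
  have hGc_le : Gc ≤ g := cor_le' (isId_dm a) had
  have hGc_rn : rn Gc = dm a := rn_cor (isId_dm a) had
  -- ah := (a | dm c)
  have hcd' : dm c ≤ rn a := by rw [har]; exact hcd
  set ah := cor a (dm c) with hah_def
  have hah_mem : ah ∈ A := A_cor hA ha (isId_dm c) hcd'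
  have hah_le : ah ≤ a := cor_le' (isId_dm c) hcd'
  have hah_rn : rn ah = dm c := rn_cor (isId_dm c) hcd'
  have hah_dm : dm ah ≤ dm a := le_dm hah_le
  -- bh := (dm ah | β)
  have hahβ : dm ah ≤ dm β := by rw [hβd]; exact le_trans hah_dm had
  set bh := res (dm ah) β with hbh_def
  have hbh_mem : bh ∈ A := A_res hA hβ (isId_dm ah) hahβ
  have hbh_le : bh ≤ β := res_le' (isId_dm ah) hahβ
  have hbh_dm : dm bh = dm ah := res_dm (isId_dm ah) hahβ
  -- b := bh⁻¹ * (ah * c)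
  have cahc : Cmp ah c := cmpd hah_rn
  have cbhinv : Cmp bh⁻¹ (ah * c) := cmpd (by rw [rn_inv, hbh_dm, dm_mul cahc])
  set b := bh⁻¹ * (ah * c) with hb_def
  have hb_mem : b ∈ A := A_mul hA (A_inv hA hbh_mem) (A_mul hA hah_mem hc cahc) cbhinv
  have hb_dm : dm b = rn bh := by rw [hb_def, dm_mul cbhinv, dm_inv]
  have hb_rn : rn b = dm h₁ := by rw [hb_def, rn_mul cbhinv, rn_mul cahc, ccr]
  -- Gb := (g₁ | dm b)
  have hbh_rn_le : rn bh ≤ rn g₁ := by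
    have h1 : rn bh ≤ rn β := le_rn hbh_le
    have h2 : rn β ≤ rn g₁ := by
      have h3 := le_rn hgle; rwa [rn_mul cαgβ] at h3
    exact le_trans h1 h2
  have hb_dm_le : dm b ≤ rn g₁ := by rw [hb_dm]; exact hbh_rn_le
  set Gb := cor g₁ (dm b) with hGb_def
  have hGb_le : Gb ≤ g₁ := cor_le' (isId_dm b) hb_dm_le
  have hGb_rn : rn Gb = dm b := rn_cor (isId_dm b) hb_dm_le
  -- ct := (c | dm γ)
  have hγc : dm γ ≤ rn c := by rw [ccr]; exact hγd1
  set ct := cor c (dm γ) with hct_def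
  have hct_mem : ct ∈ A := A_cor hA hc (isId_dm γ) hγc
  have hct_le : ct ≤ c := cor_le' (isId_dm γ) hγc
  have hct_rn : rn ct = dm γ := rn_cor (isId_dm γ) hγc
  -- at_ := (ah | dm ct)
  have hctah : dm ct ≤ rn ah := by rw [hah_rn]; exact le_dm hct_le
  set at_ := cor ah (dm ct) with hat_def
  have hat_mem : at_ ∈ A := A_cor hA hah_mem (isId_dm ct) hctah
  have hat_le : at_ ≤ ah := cor_le' (isId_dm ct) hctah
  have hat_rn : rn at_ = dm ct := rn_cor (isId_dm ct) hctah
  -- Bt := (bh⁻¹ | dm at_)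
  have hatbh : dm at_ ≤ rn bh⁻¹ := by rw [rn_inv, hbh_dm]; exact le_dm hat_le
  set Bt := cor bh⁻¹ (dm at_) with hBt_def
  have hBt_mem : Bt ∈ A := A_cor hA (A_inv hA hbh_mem) (isId_dm at_) hatbh
  have hBt_le : Bt ≤ bh⁻¹ := cor_le' (isId_dm at_) hatbh
  have hBt_rn : rn Bt = dm at_ := rn_cor (isId_dm at_) hatbh
  have hf0_le_rnbh : dm Bt ≤ rn bh := by
    have h1 := le_dm hBt_le; rwa [dm_inv] at h1
  -- G1h := (Gb | dm Bt)
  have hf0_le : dm Bt ≤ rn Gb := by rw [hGb_rn, hb_dm]; exact hf0_le_rnbh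
  set G1h := cor Gb (dm Bt) with hG1h_def
  have hG1h_le : G1h ≤ Gb := cor_le' (isId_dm Bt) hf0_le
  have hG1h_rn : rn G1h = dm Bt := rn_cor (isId_dm Bt) hf0_le
  -- β3, gt, αt
  have hf0_le_rnβ : dm Bt ≤ rn β := le_trans hf0_le_rnbh (le_rn hbh_le)
  set β3 := cor β (dm Bt) with hβ3_def
  have hβ3_mem : β3 ∈ A := A_cor hA hβ (isId_dm Bt) hf0_le_rnβ
  have hβ3_le : β3 ≤ β := cor_le' (isId_dm Bt) hf0_le_rnβ
  have hβ3_rn : rn β3 = dm Bt := rn_cor (isId_dm Bt) hf0_le_rnβ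
  have hβ3_dm_le : dm β3 ≤ rn g := by rw [← hβd]; exact le_dm hβ3_le
  set gt := cor g (dm β3) with hgt_def
  have hgt_le : gt ≤ g := cor_le' (isId_dm β3) hβ3_dm_le
  have hgt_rn : rn gt = dm β3 := rn_cor (isId_dm β3) hβ3_dm_le
  have hgt_dm_le : dm gt ≤ rn α := by rw [hαr]; exact le_dm hgt_le
  set αt := cor α (dm gt) with hαt_def
  have hαt_mem : αt ∈ A := A_cor hA hα (isId_dm gt) hgt_dm_le
  have hαt_le : αt ≤ α := cor_le' (isId_dm gt) hgt_dm_le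
  have hαt_rn : rn αt = dm gt := rn_cor (isId_dm gt) hgt_dm_le
  -- key identity : αt * gt * β3 = G1h
  have cαtgt : Cmp αt gt := cmpd hαt_rn
  have cgtβ3 : Cmp gt β3 := cmpd hgt_rn
  have cαtgtβ3 : Cmp (αt * gt) β3 := cmpd (by rw [rn_mul cαtgt]; exact hgt_rn)
  have hS_le : αt * gt * β3 ≤ α * g * β :=
    mul_le' (mul_le' hαt_le hgt_le cαtgt cαg) hβ3_le cαtgtβ3 cαgβ
  have hS_eq : αt * gt * β3 = G1h := by
    have h1 := eq_cor (le_trans hS_le hgle)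
    rw [rn_mul cαtgtβ3, hβ3_rn] at h1
    have h2 := eq_cor (le_trans hG1h_le hGb_le)
    rw [hG1h_rn] at h2
    rw [h1, ← h2]
  -- M := β3 * (Bt * (at_ * (ct * (γ * a⁻¹))))
  have cγa : Cmp γ a⁻¹ := cmpd (by rw [dm_inv, har]; exact hγr)
  have cct1 : Cmp ct (γ * a⁻¹) := cmpd (by rw [dm_mul cγa]; exact hct_rn)
  have cat2 : Cmp at_ (ct * (γ * a⁻¹)) := cmpd (by rw [dm_mul cct1]; exact hat_rn)
  have cBt3 : Cmp Bt (at_ * (ct * (γ * a⁻¹))) := cmpd (by rw [dm_mul cat2]; exact hBt_rn)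
  have cβ34 : Cmp β3 (Bt * (at_ * (ct * (γ * a⁻¹)))) :=
    cmpd (by rw [dm_mul cBt3]; exact hβ3_rn)
  set M := β3 * (Bt * (at_ * (ct * (γ * a⁻¹)))) with hM_def
  have hM_mem : M ∈ A :=
    A_mul hA hβ3_mem (A_mul hA hBt_mem (A_mul hA hat_mem
      (A_mul hA hct_mem (A_mul hA hγ (A_inv hA ha) cγa) cct1) cat2) cBt3) cβ34
  have hM_dm : dm M = dm β3 := dm_mul cβ34
  have hM_rn : rn M = dm a := by
    rw [hM_def, rn_mul cβ34, rn_mul cBt3, rn_mul cat2, rn_mul cct1, rn_mul cγa, rn_inv]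
  -- N := (gt * M) * Gc⁻¹ ∈ A  by normality (common upper bound g⁻¹)
  have cgtM : Cmp gt M := cmpd (by rw [hM_dm]; exact hgt_rn)
  have cgtMGc : Cmp (gt * M) Gc⁻¹ := cmpd (by rw [rn_mul cgtM, hM_rn, dm_inv, hGc_rn])
  have hN_mem : gt * M * Gc⁻¹ ∈ A := by
    have h1 : gt⁻¹ ≤ g⁻¹ := ord_inv _ _ hgt_le
    have h2 : Gc⁻¹ ≤ g⁻¹ := ord_inv _ _ hGc_le
    have h3 := hA.2.2.2 M hM_mem gt⁻¹ Gc⁻¹ ⟨g⁻¹, h1, h2⟩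
      (by rw [dm_inv, hgt_rn, hM_dm]) (by rw [hM_rn, dm_inv, hGc_rn])
    rwa [gpd_inv_inv] at h3
  -- u := αt * ((gt * M) * Gc⁻¹)
  have cαtN : Cmp αt (gt * M * Gc⁻¹) := cmpd (by rw [dm_mul cgtMGc, dm_mul cgtM]; exact hαt_rn)
  set u := αt * (gt * M * Gc⁻¹) with hu_def
  have hu_mem : u ∈ A := A_mul hA hαt_mem hN_mem cαtN
  -- values: u * (Gc*a*h) * δ = G1h * (Bt*(at_*(ct*(γ*h*δ))))
  have cah : Cmp a h := cmpd har
  have cGca : Cmp Gc a := cmpd hGc_rn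
  have cGcah' : Cmp (Gc * a) h := cmpd (by rw [rn_mul cGca, har])
  have caiah : Cmp a⁻¹ (a * h) := cmpd (by rw [rn_inv, dm_mul cah])
  have cM1ah : Cmp (γ * a⁻¹) (a * h) := cmpd (by rw [rn_mul cγa, rn_inv, dm_mul cah])
  have cM2ah : Cmp (ct * (γ * a⁻¹)) (a * h) :=
    cmpd (by rw [rn_mul cct1, rn_mul cγa, rn_inv, dm_mul cah])
  have cM3ah : Cmp (at_ * (ct * (γ * a⁻¹))) (a * h) :=
    cmpd (by rw [rn_mul cat2, rn_mul cct1, rn_mul cγa, rn_inv, dm_mul cah])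
  have cM4ah : Cmp (Bt * (at_ * (ct * (γ * a⁻¹)))) (a * h) :=
    cmpd (by rw [rn_mul cBt3, rn_mul cat2, rn_mul cct1, rn_mul cγa, rn_inv, dm_mul cah])
  have cMah : Cmp M (a * h) := cmpd (by rw [hM_rn, dm_mul cah])
  have cGc_ah : Cmp Gc (a * h) := cmpd (by rw [dm_mul cah]; exact hGc_rn)
  have cGcinv : Cmp Gc⁻¹ (Gc * (a * h)) := cmpd (by rw [rn_inv, dm_mul cGc_ah])
  have cNx : Cmp (gt * M * Gc⁻¹) (Gc * (a * h)) :=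
    cmpd (by rw [rn_mul cgtMGc, rn_inv, dm_mul cGc_ah])
  have E1 : γ * a⁻¹ * (a * h) = γ * h := by rw [massoc cγa caiah, cancel_left cah]
  have E2 : ct * (γ * a⁻¹) * (a * h) = ct * (γ * h) := by rw [massoc cct1 cM1ah, E1]
  have E3 : at_ * (ct * (γ * a⁻¹)) * (a * h) = at_ * (ct * (γ * h)) := by
    rw [massoc cat2 cM2ah, E2]
  have E4 : Bt * (at_ * (ct * (γ * a⁻¹))) * (a * h) = Bt * (at_ * (ct * (γ * h))) := by
    rw [massoc cBt3 cM3ah, E3]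
  have E5 : M * (a * h) = β3 * (Bt * (at_ * (ct * (γ * h)))) := by
    rw [hM_def, massoc cβ34 cM4ah, E4]
  have E6 : gt * M * (a * h) = gt * (β3 * (Bt * (at_ * (ct * (γ * h))))) := by
    rw [massoc cgtM cMah, E5]
  have E7 : gt * M * Gc⁻¹ * (Gc * (a * h)) = gt * M * (a * h) := by
    rw [massoc cgtMGc cGcinv, cancel_left cGc_ah]
  have E9 : u * (Gc * a * h) = αt * (gt * (β3 * (Bt * (at_ * (ct * (γ * h)))))) := by
    rw [massoc cGca cah, hu_def, massoc cαtN cNx, E7, E6]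
  -- push δ inside
  have cctγh : Cmp ct (γ * h) := cmpd (by rw [dm_mul cγh]; exact hct_rn)
  have cctγh_δ : Cmp (ct * (γ * h)) δ :=
    cmpd (by rw [rn_mul cctγh, rn_mul cγh]; exact cmpr chδ)
  have cat_ctγh : Cmp at_ (ct * (γ * h)) := cmpd (by rw [dm_mul cctγh]; exact hat_rn)
  have cx1_δ : Cmp (at_ * (ct * (γ * h))) δ :=
    cmpd (by rw [rn_mul cat_ctγh, rn_mul cctγh, rn_mul cγh]; exact cmpr chδ)
  have cBt_x1 : Cmp Bt (at_ * (ct * (γ * h))) := cmpd (by rw [dm_mul cat_ctγh]; exact hBt_rn)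
  have cx2_δ : Cmp (Bt * (at_ * (ct * (γ * h)))) δ :=
    cmpd (by rw [rn_mul cBt_x1, rn_mul cat_ctγh, rn_mul cctγh, rn_mul cγh]; exact cmpr chδ)
  have cβ3_x2 : Cmp β3 (Bt * (at_ * (ct * (γ * h)))) :=
    cmpd (by rw [dm_mul cBt_x1]; exact hβ3_rn)
  have cx3_δ : Cmp (β3 * (Bt * (at_ * (ct * (γ * h))))) δ :=
    cmpd (by rw [rn_mul cβ3_x2, rn_mul cBt_x1, rn_mul cat_ctγh, rn_mul cctγh, rn_mul cγh]
             exact cmpr chδ)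
  have cgt_x3 : Cmp gt (β3 * (Bt * (at_ * (ct * (γ * h))))) :=
    cmpd (by rw [dm_mul cβ3_x2]; exact hgt_rn)
  have cx4_δ : Cmp (gt * (β3 * (Bt * (at_ * (ct * (γ * h)))))) δ :=
    cmpd (by rw [rn_mul cgt_x3, rn_mul cβ3_x2, rn_mul cBt_x1, rn_mul cat_ctγh,
                 rn_mul cctγh, rn_mul cγh]
             exact cmpr chδ)
  have cαt_x4 : Cmp αt (gt * (β3 * (Bt * (at_ * (ct * (γ * h)))))) :=
    cmpd (by rw [dm_mul cgt_x3]; exact hαt_rn)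
  have F2 : ct * (γ * h) * δ = ct * (γ * h * δ) := massoc cctγh cγhδ
  have F3 : at_ * (ct * (γ * h)) * δ = at_ * (ct * (γ * h * δ)) := by
    rw [massoc cat_ctγh cctγh_δ, F2]
  have F4 : Bt * (at_ * (ct * (γ * h))) * δ = Bt * (at_ * (ct * (γ * h * δ))) := by
    rw [massoc cBt_x1 cx1_δ, F3]
  have F5 : β3 * (Bt * (at_ * (ct * (γ * h)))) * δ
      = β3 * (Bt * (at_ * (ct * (γ * h * δ)))) := by
    rw [massoc cβ3_x2 cx2_δ, F4]
  have F6 : gt * (β3 * (Bt * (at_ * (ct * (γ * h))))) * δ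
      = gt * (β3 * (Bt * (at_ * (ct * (γ * h * δ))))) := by
    rw [massoc cgt_x3 cx3_δ, F5]
  have F7 : αt * (gt * (β3 * (Bt * (at_ * (ct * (γ * h)))))) * δ
      = αt * (gt * (β3 * (Bt * (at_ * (ct * (γ * h * δ)))))) := by
    rw [massoc cαt_x4 cx4_δ, F6]
  -- P_eq
  have cctT : Cmp ct (γ * h * δ) := cmpd (by rw [dm_mul cγhδ, dm_mul cγh]; exact hct_rn)
  have catT : Cmp at_ (ct * (γ * h * δ)) := cmpd (by rw [dm_mul cctT]; exact hat_rn)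
  have cBtT : Cmp Bt (at_ * (ct * (γ * h * δ))) := cmpd (by rw [dm_mul catT]; exact hBt_rn)
  have cβ3V0 : Cmp β3 (Bt * (at_ * (ct * (γ * h * δ)))) :=
    cmpd (by rw [dm_mul cBtT]; exact hβ3_rn)
  have cgtβ3V0 : Cmp gt (β3 * (Bt * (at_ * (ct * (γ * h * δ))))) :=
    cmpd (by rw [dm_mul cβ3V0]; exact hgt_rn)
  have hP_eq : u * (Gc * a * h) * δ = G1h * (Bt * (at_ * (ct * (γ * h * δ)))) := by
    rw [E9, F7, ← hS_eq, massoc cαtgtβ3 cβ3V0, massoc cαtgt cgtβ3V0]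
  -- the ordering chain
  have ccth1 : Cmp c h₁ := cmpd ccr
  have T3 : ct * (γ * h * δ) ≤ c * h₁ := mul_le' hct_le hhle cctT ccth1
  have cahch1 : Cmp ah (c * h₁) := cmpd (by rw [dm_mul ccth1]; exact hah_rn)
  have T2 : at_ * (ct * (γ * h * δ)) ≤ ah * (c * h₁) := mul_le' hat_le T3 catT cahch1
  have cbhT : Cmp bh⁻¹ (ah * (c * h₁)) := cmpd (by rw [dm_mul cahch1, rn_inv, hbh_dm])
  have T1 : Bt * (at_ * (ct * (γ * h * δ))) ≤ bh⁻¹ * (ah * (c * h₁)) :=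
    mul_le' hBt_le T2 cBtT cbhT
  have cG1hT : Cmp G1h (Bt * (at_ * (ct * (γ * h * δ)))) :=
    cmpd (by rw [dm_mul cBtT]; exact hG1h_rn)
  have cGbW : Cmp Gb (bh⁻¹ * (ah * (c * h₁))) := by
    refine cmpd ?_
    rw [dm_mul cbhT, dm_inv, hGb_rn, hb_dm]
  have T0 : G1h * (Bt * (at_ * (ct * (γ * h * δ)))) ≤ Gb * (bh⁻¹ * (ah * (c * h₁))) :=
    mul_le' hG1h_le T1 cG1hT cGbW
  -- W rewriting: bh⁻¹ * (ah * (c*h₁)) = b * h₁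
  have cahc_h1 : Cmp (ah * c) h₁ := cmpd (by rw [rn_mul cahc, ccr])
  have hW_eq : b * h₁ = bh⁻¹ * (ah * (c * h₁)) := by
    rw [hb_def, massoc cbhinv cahc_h1, massoc cahc ccth1]
  have hP_le : G1h * (Bt * (at_ * (ct * (γ * h * δ)))) ≤ Gb * (b * h₁) := by
    rw [hW_eq]; exact T0
  -- u0 := G1c * (a₁ * (b⁻¹ * Gb⁻¹)) ∈ A, and u0 * (Gb*(b*h₁)) = target
  set G1c := cor g₁ (dm a₁) with hG1c_def
  have hG1c_le : G1c ≤ g₁ := cor_le' (isId_dm a₁) ha₁d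
  have hG1c_rn : rn G1c = dm a₁ := rn_cor (isId_dm a₁) ha₁d
  have cbiGbi : Cmp b⁻¹ Gb⁻¹ := cmpd (by rw [rn_inv, dm_inv, hGb_rn])
  have ca1t : Cmp a₁ (b⁻¹ * Gb⁻¹) := cmpd (by rw [dm_mul cbiGbi, dm_inv, hb_rn]; exact ha₁r)
  have cG1ct : Cmp G1c (a₁ * (b⁻¹ * Gb⁻¹)) := cmpd (by rw [dm_mul ca1t]; exact hG1c_rn)
  set u0 := G1c * (a₁ * (b⁻¹ * Gb⁻¹)) with hu0_def
  have ca1b : Cmp a₁ b⁻¹ := cmpd (by rw [dm_inv, hb_rn]; exact ha₁r)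
  have cG1c_ab : Cmp G1c (a₁ * b⁻¹) := cmpd (by rw [dm_mul ca1b]; exact hG1c_rn)
  have cabGb : Cmp (a₁ * b⁻¹) Gb⁻¹ := cmpd (by rw [rn_mul ca1b, rn_inv, dm_inv, hGb_rn])
  have hu0_mem : u0 ∈ A := by
    have hmid : a₁ * b⁻¹ ∈ A := A_mul hA ha₁ (A_inv hA hb_mem) ca1b
    have h3 := hA.2.2.2 (a₁ * b⁻¹) hmid G1c⁻¹ Gb⁻¹
      ⟨g₁⁻¹, ord_inv _ _ hG1c_le, ord_inv _ _ hGb_le⟩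
      (by rw [dm_inv, hG1c_rn, dm_mul ca1b]) (by rw [rn_mul ca1b, rn_inv, dm_inv, hGb_rn])
    rw [gpd_inv_inv] at h3
    have he : u0 = G1c * (a₁ * b⁻¹) * Gb⁻¹ := by
      rw [hu0_def, massoc cG1c_ab cabGb, massoc ca1b cbiGbi]
    rw [he]; exact h3
  have cb_h1 : Cmp b h₁ := cmpd hb_rn
  have cGb_bh1 : Cmp Gb (b * h₁) := cmpd (by rw [dm_mul cb_h1]; exact hGb_rn)
  have cG1ca1 : Cmp G1c a₁ := cmpd hG1c_rn
  have ca1h1 : Cmp a₁ h₁ := cmpd ha₁r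
  have hu0z : u0 * (Gb * (b * h₁)) = G1c * a₁ * h₁ := by
    have ct1 : Cmp (a₁ * (b⁻¹ * Gb⁻¹)) (Gb * (b * h₁)) :=
      cmpd (by rw [rn_mul ca1t, rn_mul cbiGbi, rn_inv, dm_mul cGb_bh1])
    have ct2 : Cmp (b⁻¹ * Gb⁻¹) (Gb * (b * h₁)) :=
      cmpd (by rw [rn_mul cbiGbi, rn_inv, dm_mul cGb_bh1])
    have ct3 : Cmp Gb⁻¹ (Gb * (b * h₁)) := cmpd (by rw [rn_inv, dm_mul cGb_bh1])
    rw [hu0_def, massoc cG1ct ct1, massoc ca1t ct2, massoc cbiGbi ct3,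
        cancel_left cGb_bh1, cancel_left cb_h1, ← massoc cG1ca1 ca1h1]
  -- U := (u0 | dm P)
  have hdmP : dm (G1h * (Bt * (at_ * (ct * (γ * h * δ))))) = dm G1h := dm_mul cG1hT
  have hrnu0 : rn u0 = dm Gb := by
    rw [hu0_def, rn_mul cG1ct, rn_mul ca1t, rn_mul cbiGbi, rn_inv]
  have hdmP_le : dm (G1h * (Bt * (at_ * (ct * (γ * h * δ))))) ≤ rn u0 := by
    rw [hdmP, hrnu0]; exact le_dm hG1h_le
  set U := cor u0 (dm (G1h * (Bt * (at_ * (ct * (γ * h * δ)))))) with hU_def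
  have hU_mem : U ∈ A := A_cor hA hu0_mem (isId_dm _) hdmP_le
  have hU_le : U ≤ u0 := cor_le' (isId_dm _) hdmP_le
  have hU_rn : rn U = dm (G1h * (Bt * (at_ * (ct * (γ * h * δ))))) :=
    rn_cor (isId_dm _) hdmP_le
  have hdmG1h : dm G1h = dm αt := by rw [← hS_eq, dm_mul cαtgtβ3, dm_mul cαtgt]
  have hdmu : dm u = dm αt := by rw [hu_def, dm_mul cαtN]
  have cUu : Cmp U u := cmpd (by rw [hU_rn, hdmP, hdmG1h, hdmu])
  have cUP : Cmp U (G1h * (Bt * (at_ * (ct * (γ * h * δ))))) := cmpd hU_rn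
  have cu0z : Cmp u0 (Gb * (b * h₁)) := cmpd (by rw [hrnu0, dm_mul cGb_bh1])
  have final_le : U * (G1h * (Bt * (at_ * (ct * (γ * h * δ))))) ≤ G1c * a₁ * h₁ := by
    rw [← hu0z]; exact mul_le' hU_le hP_le cUP cu0z
  -- final Cmp facts and assembly
  have hrnu : rn u = dm Gc := by rw [hu_def, rn_mul cαtN, rn_mul cgtMGc, rn_inv]
  have hdmx : dm (Gc * a * h) = dm Gc := by rw [dm_mul cGcah', dm_mul cGca]
  have cux : Cmp u (Gc * a * h) := cmpd (by rw [hrnu, hdmx])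
  have cUux : Cmp (U * u) (Gc * a * h) := cmpd (by rw [rn_mul cUu, hrnu, hdmx])
  have cxδ : Cmp (Gc * a * h) δ := cmpd (by rw [rn_mul cGcah', hδd])
  have cU_ux : Cmp U (u * (Gc * a * h)) :=
    cmpd (by rw [hU_rn, hdmP, hdmG1h, dm_mul cux, hdmu])
  have c_ux_δ : Cmp (u * (Gc * a * h)) δ := cmpd (by rw [rn_mul cux, rn_mul cGcah', hδd])
  have hassemble : U * u * (Gc * a * h) * δ = U * (u * (Gc * a * h) * δ) := by
    rw [massoc cUu cux, massoc cU_ux c_ux_δ]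
  refine ⟨U * u, A_mul hA hU_mem hu_mem cUu, δ, hδ, cUux, cxδ, ?_⟩
  rw [hassemble, hP_eq]
  exact final_le

end OGroupoid


/-- **Statement 11.** If `g ≃_A g₁`, `h ≃_A h₁` and `g⁻¹g ≃_A hh⁻¹`, then for any
`A`-nexus `(a,p)` between `g⁻¹g` and `hh⁻¹` and any `A`-nexus `(a₁,p₁)` between
`g₁⁻¹g₁` and `h₁h₁⁻¹`, we have `(g|a𝐝)·a·h ≃_A (g₁|a₁𝐝)·a₁·h₁`; hence the quotient
composition `[g][h] = [(g|a𝐝)ah]` is well defined. -/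
theorem quotient_composition_well_defined {G : Type u} [OGroupoid G] (A : Set G)
    (hA : IsNormalOSub A) (g g₁ h h₁ a p a₁ p₁ : G)
    (hg : simA A g g₁) (hh : simA A h h₁)
    (hsim : simA A (rn g) (dm h))
    (hnx : IsNexus A a p (rn g) (dm h))
    (hnx₁ : IsNexus A a₁ p₁ (rn g₁) (dm h₁)) :
    simA A (cor g (dm a) * a * h) (cor g₁ (dm a₁) * a₁ * h₁) := by
  obtain ⟨⟨α, hα, β, hβ, cαg, cgβ, hgle⟩, ⟨α', hα', β', hβ', cαg', cgβ', hgle'⟩⟩ := hg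
  obtain ⟨⟨γ, hγ, δ, hδ, cγh, chδ, hhle⟩, ⟨γ', hγ', δ', hδ', cγh', chδ', hhle'⟩⟩ := hh
  obtain ⟨haA, -, had, har, -, -⟩ := hnx
  obtain ⟨ha₁A, -, ha₁d, ha₁r, -, -⟩ := hnx₁
  have hγ'd : dm γ' ≤ dm h := by
    have h0 := le_dm hhle'
    rwa [dm_mul (cmpd (by rw [rn_mul cγh']; exact cmpr chδ')), dm_mul cγh'] at h0
  have hγd : dm γ ≤ dm h₁ := by
    have h0 := le_dm hhle
    rwa [dm_mul (cmpd (by rw [rn_mul cγh]; exact cmpr chδ)), dm_mul cγh] at h0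
  constructor
  · exact main_half hA haA had har ha₁A ha₁d ha₁r hα hβ cαg cgβ hgle
      hγ hδ cγh chδ hhle hγ' (cmpr cγh') hγ'd
  · exact main_half hA ha₁A ha₁d ha₁r haA had har hα' hβ' cαg' cgβ' hgle'
      hγ' hδ' cγh' chδ' hhle' hγ (cmpr cγh) hγd
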